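/- arXiv:2308.02763 — 2 statements merged into one kernel-verified Lean document; each statement's English description precedes it below -/
import Mathlib

section
/- The set of satisfying consistent cuts of a conjunctive predicate forms a lattice under set inclusion, where the join of two satcuts is their union and the meet is their intersection; i.e., if C and C' are satcuts then C ∩ C' and C ∪ C' are satcuts. -/
open scoped NNReal

/-- A consistent cut: a set of events closed under happened-before predecessors. -/
def ConsistentCut {N : ℕ} (hb : (Fin N × ℝ≥0) → (Fin N × ℝ≥0) → Prop)
    (C : Set (Fin N × ℝ≥0)) : Prop :=
  ∀ e ∈ C, ∀ f, hb f e → f ∈ C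

/-- A satisfying cut for the conjunctive predicate ⋀ₙ (xₙ ≥ 0): a consistent cut whose
frontier timestamps `tₙ = sup Cᵗ[n]` satisfy `xₙ(tₙ) ≥ 0` for every agent. -/
noncomputable def IsSatcut {N : ℕ} (x : Fin N → ℝ≥0 → ℝ)
    (hb : (Fin N × ℝ≥0) → (Fin N × ℝ≥0) → Prop) (C : Set (Fin N × ℝ≥0)) : Prop :=
  ConsistentCut hb C ∧ ∀ n : Fin N, 0 ≤ x n (sSup {t | (n, t) ∈ C})

/-- The set of satcuts of a conjunctive predicate is a lattice under inclusion:
the intersection (meet) and union (join) of two satcuts are satcuts. -/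
theorem satcut_lattice {N : ℕ} (ε : ℝ≥0) (hε : 0 < ε)
    (x : Fin N → ℝ≥0 → ℝ)
    (hb : (Fin N × ℝ≥0) → (Fin N × ℝ≥0) → Prop)
    (hlocal : ∀ (n : Fin N) (t t' : ℝ≥0), t < t' → hb (n, t) (n, t'))
    (hskew : ∀ (n m : Fin N) (t t' : ℝ≥0), t + ε ≤ t' → hb (n, t) (m, t'))
    (htrans : Transitive hb)
    (C C' : Set (Fin N × ℝ≥0))
    (hC : IsSatcut x hb C) (hC' : IsSatcut x hb C') :
    IsSatcut x hb (C ∩ C') ∧ IsSatcut x hb (C ∪ C') := by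
  obtain ⟨hCc, hCs⟩ := hC
  obtain ⟨hC'c, hC's⟩ := hC'
  have hcomp : ∀ n : Fin N, {t | (n, t) ∈ C} ⊆ {t | (n, t) ∈ C'} ∨
      {t | (n, t) ∈ C'} ⊆ {t | (n, t) ∈ C} := by
    intro n
    by_contra h
    rw [not_or, Set.not_subset, Set.not_subset] at h
    obtain ⟨⟨t, ht, ht'⟩, ⟨s, hs, hs'⟩⟩ := h
    rcases lt_trichotomy t s with hlt | heq | hgt
    · exact ht' (hC'c _ hs _ (hlocal n t s hlt))
    · exact ht' (heq ▸ hs)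
    · exact hs' (hCc _ ht _ (hlocal n s t hgt))
  constructor
  · refine ⟨fun e he f hf => ⟨hCc e he.1 f hf, hC'c e he.2 f hf⟩, ?_⟩
    intro n
    rcases hcomp n with h | h
    · have heq : {t | (n, t) ∈ C ∩ C'} = {t | (n, t) ∈ C} := by
        ext t; exact ⟨fun h' => h'.1, fun h' => ⟨h', h h'⟩⟩
      rw [heq]; exact hCs n
    · have heq : {t | (n, t) ∈ C ∩ C'} = {t | (n, t) ∈ C'} := by
        ext t; exact ⟨fun h' => h'.2, fun h' => ⟨h h', h'⟩⟩
      rw [heq]; exact hC's n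
  · refine ⟨fun e he f hf => he.elim (fun h1 => Or.inl (hCc e h1 f hf))
      (fun h2 => Or.inr (hC'c e h2 f hf)), ?_⟩
    intro n
    rcases hcomp n with h | h
    · have heq : {t | (n, t) ∈ C ∪ C'} = {t | (n, t) ∈ C'} := by
        ext t; exact ⟨fun h' => h'.elim (fun h1 => h h1) id, fun h' => Or.inr h'⟩
      rw [heq]; exact hC's n
    · have heq : {t | (n, t) ∈ C ∪ C'} = {t | (n, t) ∈ C} := by
        ext t; exact ⟨fun h' => h'.elim id (fun h2 => h h2), fun h' => Or.inl h'⟩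
      rw [heq]; exact hCs n
end

section
/- For any consistent cut C of a distributed signal with skew bound ε, if C is not all of E, then the frontier timestamps t_n = sup C^τ[n] are all finite and satisfy |t_n − t_m| ≤ ε for all agents n, m. -/
open scoped NNReal

/-! Every event `(n, t)` of the cut has all events at least `ε` earlier, on every agent, below it
in the cut. An event `(m₀, s)` outside the cut therefore caps every agent's timestamps at `s + ε`,
and a timestamp `t` of agent `n` puts `t - ε` among the timestamps of agent `m`, so the frontiers
differ by at most `ε`. -/

section SkewClosed

variable {ι : Type*} {C : Set (ι × ℝ≥0)} {ε : ℝ≥0}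

theorem bddAbove_timestamps_of_not_mem
    (hdown : ∀ n m t t', t + ε ≤ t' → (m, t') ∈ C → (n, t) ∈ C)
    {m₀ : ι} {s : ℝ≥0} (hs : (m₀, s) ∉ C) (n : ι) :
    BddAbove {t | (n, t) ∈ C} := by
  refine ⟨s + ε, fun t ht => ?_⟩
  by_contra hlt
  exact hs (hdown m₀ n s t (not_le.1 hlt).le ht)

theorem sSup_timestamps_le_add
    (hdown : ∀ n m t t', t + ε ≤ t' → (m, t') ∈ C → (n, t) ∈ C)
    {n m : ι} (hn : {t | (n, t) ∈ C}.Nonempty) (hm : BddAbove {t | (m, t) ∈ C}) :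
    sSup {t | (n, t) ∈ C} ≤ sSup {t | (m, t) ∈ C} + ε := by
  refine csSup_le hn fun t ht => tsub_le_iff_right.1 ?_
  rcases le_or_gt ε t with hεt | htε
  · exact le_csSup hm (hdown m n (t - ε) t (tsub_add_cancel_of_le hεt).le ht)
  · rw [tsub_eq_zero_of_le htε.le]
    exact zero_le

end SkewClosed

theorem NNReal.abs_coe_sub_le_of_le_add {a b ε : ℝ≥0} (hab : a ≤ b + ε) (hba : b ≤ a + ε) :
    |(a : ℝ) - b| ≤ ε := by
  have hab' : (a : ℝ) ≤ b + ε := by exact_mod_cast hab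
  have hba' : (b : ℝ) ≤ a + ε := by exact_mod_cast hba
  exact abs_sub_le_iff.2 ⟨by linarith, by linarith⟩

theorem frontier_skew_bound_general {N : ℕ} (ε : ℝ≥0)
    (hb : (Fin N × ℝ≥0) → (Fin N × ℝ≥0) → Prop)
    (hskew : ∀ (n m : Fin N) (t t' : ℝ≥0), t + ε ≤ t' → hb (n, t) (m, t'))
    (C : Set (Fin N × ℝ≥0))
    (hC : ConsistentCut hb C)
    (hnonempty : ∀ n : Fin N, ∃ t : ℝ≥0, (n, t) ∈ C)
    (hne : C ≠ Set.univ) :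
    (∀ n : Fin N, BddAbove {t | (n, t) ∈ C}) ∧
      ∀ n m : Fin N,
        |((sSup {t | (n, t) ∈ C} : ℝ≥0) : ℝ) - ((sSup {t | (m, t) ∈ C} : ℝ≥0) : ℝ)| ≤ ε := by
  have hdown : ∀ n m t t', t + ε ≤ t' → (m, t') ∈ C → (n, t) ∈ C :=
    fun n m t t' hle hmem => hC _ hmem _ (hskew n m t t' hle)
  obtain ⟨⟨m₀, s⟩, -, hs⟩ := Set.exists_of_ssubset (Set.ssubset_univ_iff.2 hne)
  have hbdd := bddAbove_timestamps_of_not_mem hdown hs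
  refine ⟨hbdd, fun n m => NNReal.abs_coe_sub_le_of_le_add ?_ ?_⟩
  · exact sSup_timestamps_le_add hdown (hnonempty n) (hbdd m)
  · exact sSup_timestamps_le_add hdown (hnonempty m) (hbdd n)

/-- For a consistent cut `C ≠ E` containing at least one event of every agent, the frontier
timestamps `tₙ = sup Cᵗ[n]` are all finite (the timestamp sets are bounded above) and
satisfy `|tₙ - tₘ| ≤ ε` for all agents `n`, `m`. -/
theorem frontier_skew_bound {N : ℕ} (ε : ℝ≥0) (hε : 0 < ε)
    (hb : (Fin N × ℝ≥0) → (Fin N × ℝ≥0) → Prop)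
    (hlocal : ∀ (n : Fin N) (t t' : ℝ≥0), t < t' → hb (n, t) (n, t'))
    (hskew : ∀ (n m : Fin N) (t t' : ℝ≥0), t + ε ≤ t' → hb (n, t) (m, t'))
    (htrans : Transitive hb)
    (C : Set (Fin N × ℝ≥0))
    (hC : ConsistentCut hb C)
    (hnonempty : ∀ n : Fin N, ∃ t : ℝ≥0, (n, t) ∈ C)
    (hne : C ≠ Set.univ) :
    (∀ n : Fin N, BddAbove {t | (n, t) ∈ C}) ∧
      ∀ n m : Fin N,
        |((sSup {t | (n, t) ∈ C} : ℝ≥0) : ℝ) - ((sSup {t | (m, t) ∈ C} : ℝ≥0) : ℝ)| ≤ ε :=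
  frontier_skew_bound_general ε hb hskew C hC hnonempty hne
end
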